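/- Let μ be a probability measure on {0,1}^∞ and for u ∈ {0,1}* set μ_u := μ{v ∈ {0,1}^∞ : u is a prefix of v}. Then the function h(s) := (#s)! · ∏_{u∈s} μ_u on finite rooted binary trees is harmonic for the BST chain: ∑_t P(s,t) h(t) = h(s), where the sum is over the #s+1 trees t obtained from s by adjoining one external vertex and P(s,t) = 1/(#s+1). -/

import Mathlib

open Finset MeasureTheory

/-- A finite rooted binary tree: a nonempty, prefix-closed finite set of words over
`{0,1}` (encoded as `List Bool`), containing the root `[]`. -/
def IsBinTree (t : Finset (List Bool)) : Prop :=
  ([] : List Bool) ∈ t ∧ ∀ v ∈ t, ∀ u : List Bool, u <+: v → u ∈ t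

/-- The external vertices of a finite rooted binary tree `s`: words not in `s` whose
parent belongs to `s`. -/
def extVerts (s : Finset (List Bool)) : Finset (List Bool) :=
  (s.image (fun u => u ++ [true]) ∪ s.image (fun u => u ++ [false])) \ s

/-- The cylinder set of infinite `{0,1}`-words (elements of `{0,1}^∞ = ℕ → Bool`)
having the finite word `u` as a prefix. -/
def cylinder (u : List Bool) : Set (ℕ → Bool) :=
  {v | ∀ i : Fin u.length, v i = u.get i}

/-!
For a finite binary tree `s`, every infinite word has exactly one external vertex of `s` as a
prefix: the successor of its longest prefix lying in `s`. So the cylinders over `extVerts s`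
partition `{0,1}^∞` and `∑_{u external} μ_u = 1`. Adjoining the external vertex `u` multiplies
`(#s)! ∏_{w ∈ s} μ_w` by `(#s + 1) μ_u`, and the factor `#s + 1` cancels the transition
probability.
-/

lemma mem_cylinder_iff {u : List Bool} {v : ℕ → Bool} :
    v ∈ _root_.cylinder u ↔ ∀ (i : ℕ) (hi : i < u.length), v i = u[i] :=
  ⟨fun h i hi => h ⟨i, hi⟩, fun h i => h i i.2⟩

lemma measurableSet_cylinder (u : List Bool) : MeasurableSet (_root_.cylinder u) := by
  have : _root_.cylinder u = ⋂ i : Fin u.length, (fun v : ℕ → Bool => v i) ⁻¹' {u.get i} := by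
    ext v; simp [_root_.cylinder]
  rw [this]
  exact .iInter fun i => measurable_pi_apply _ (measurableSet_singleton _)

lemma mem_cylinder_append_singleton {u : List Bool} {v : ℕ → Bool} (hv : v ∈ _root_.cylinder u) :
    v ∈ _root_.cylinder (u ++ [v u.length]) := by
  rw [mem_cylinder_iff] at hv ⊢
  intro i hi
  rcases Nat.lt_or_ge i u.length with hlt | hge
  · rw [List.getElem_append_left hlt, hv i hlt]
  · obtain rfl : i = u.length := by simp at hi; omega
    simp

lemma prefix_of_mem_cylinder {u w : List Bool} {v : ℕ → Bool} (hu : v ∈ _root_.cylinder u)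
    (hw : v ∈ _root_.cylinder w) (hlen : u.length ≤ w.length) : u <+: w := by
  rw [mem_cylinder_iff] at hu hw
  rw [List.prefix_iff_eq_take]
  refine List.ext_getElem (by simp [hlen]) fun i hi _ => ?_
  rw [List.getElem_take, ← hu i hi, hw]

lemma mem_extVerts {s : Finset (List Bool)} {u : List Bool} :
    u ∈ extVerts s ↔ u ∉ s ∧ ∃ p ∈ s, ∃ b, u = p ++ [b] := by
  simp only [extVerts, mem_sdiff, mem_union, mem_image]
  constructor
  · rintro ⟨⟨p, hp, rfl⟩ | ⟨p, hp, rfl⟩, hu⟩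
    exacts [⟨hu, p, hp, true, rfl⟩, ⟨hu, p, hp, false, rfl⟩]
  · rintro ⟨hu, p, hp, b | b, rfl⟩
    exacts [⟨Or.inr ⟨p, hp, rfl⟩, hu⟩, ⟨Or.inl ⟨p, hp, rfl⟩, hu⟩]

lemma iUnion_cylinder_extVerts {s : Finset (List Bool)} (hs : ([] : List Bool) ∈ s) :
    ⋃ u ∈ extVerts s, _root_.cylinder u = Set.univ := by
  classical
  refine Set.eq_univ_of_forall fun v => Set.mem_iUnion₂.2 ?_
  obtain ⟨p, hp, hmax⟩ := (s.filter (v ∈ _root_.cylinder ·)).exists_max_image List.length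
    ⟨[], mem_filter.2 ⟨hs, fun i => i.elim0⟩⟩
  rw [mem_filter] at hp
  have hv := mem_cylinder_append_singleton hp.2
  refine ⟨_, mem_extVerts.2 ⟨fun hs' => ?_, p, hp.1, _, rfl⟩, hv⟩
  simpa using hmax _ (mem_filter.2 ⟨hs', hv⟩)

lemma eq_of_prefix_of_mem_extVerts {s : Finset (List Bool)}
    (hs : ∀ v ∈ s, ∀ u : List Bool, u <+: v → u ∈ s) {u w : List Bool}
    (hu : u ∈ extVerts s) (hw : w ∈ extVerts s) (huw : u <+: w) : u = w := by
  obtain ⟨p, hp, b, rfl⟩ := (mem_extVerts.1 hw).2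
  refine (List.prefix_concat_iff.1 huw).resolve_right fun hup => ?_
  exact (mem_extVerts.1 hu).1 (hs p hp u hup)

lemma pairwiseDisjoint_cylinder_extVerts {s : Finset (List Bool)}
    (hs : ∀ v ∈ s, ∀ u : List Bool, u <+: v → u ∈ s) :
    (extVerts s : Set (List Bool)).PairwiseDisjoint _root_.cylinder := by
  intro u hu w hw hne
  refine Set.disjoint_left.2 fun v hvu hvw => hne ?_
  rcases le_total u.length w.length with hlen | hlen
  · exact eq_of_prefix_of_mem_extVerts hs hu hw (prefix_of_mem_cylinder hvu hvw hlen)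
  · exact (eq_of_prefix_of_mem_extVerts hs hw hu (prefix_of_mem_cylinder hvw hvu hlen)).symm

lemma sum_measure_cylinder_extVerts (μ : Measure (ℕ → Bool)) {s : Finset (List Bool)}
    (hs : IsBinTree s) : ∑ u ∈ extVerts s, μ (_root_.cylinder u) = μ Set.univ := by
  rw [← measure_biUnion_finset (pairwiseDisjoint_cylinder_extVerts hs.2)
    (fun u _ => measurableSet_cylinder u), iUnion_cylinder_extVerts hs.1]

/-- **Harmonicity for the BST chain.**  Let `μ` be a probability measure on
`{0,1}^∞` and `μ_u := μ(cylinder u)`.  Then `h(s) := (#s)! · ∏_{u ∈ s} μ_u` is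
harmonic for the BST chain: `∑_t P(s,t) h(t) = h(s)`, where the sum runs over the
`#s + 1` trees `t = insert u s` obtained by adjoining an external vertex `u` of `s`,
each with `P(s,t) = 1/(#s+1)`. -/
theorem bst_harmonic_function
    (μ : Measure (ℕ → Bool)) [IsProbabilityMeasure μ]
    (h : Finset (List Bool) → ℝ)
    (hdef : ∀ s : Finset (List Bool),
      h s = (s.card.factorial : ℝ) * ∏ u ∈ s, (μ (cylinder u)).toReal)
    (s : Finset (List Bool)) (hs : IsBinTree s) :
    ∑ u ∈ extVerts s, (1 / (s.card + 1 : ℝ)) * h (insert u s) = h s := by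
  have hsum : ∑ u ∈ extVerts s, (μ (cylinder u)).toReal = 1 := by
    rw [← ENNReal.toReal_sum fun u _ => measure_ne_top μ _,
      sum_measure_cylinder_extVerts μ hs, measure_univ, ENNReal.toReal_one]
  have hstep : ∀ u ∈ extVerts s, (1 / (s.card + 1 : ℝ)) * h (insert u s) =
      h s * (μ (cylinder u)).toReal := by
    intro u hu
    have hus : u ∉ s := (mem_extVerts.1 hu).1
    rw [hdef, hdef, card_insert_of_notMem hus, prod_insert hus, Nat.factorial_succ]
    push_cast
    field_simp
  rw [sum_congr rfl hstep, ← mul_sum, hsum, mul_one]
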